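/- For every integer k ≥ 1, the ideal (x^2, y^2, z^2, xy + xz + yz)^k in C[x,y,z] contains every monomial of degree 2k+1, so the Hilbert function of C[x,y,z]/(x^2, y^2, z^2, xy + xz + yz)^k is zero in all degrees i ≥ 2k+1. -/
import Mathlib


open MvPolynomial

private lemma xyz_mem :
    (X 0 * X 1 * X 2 : MvPolynomial (Fin 3) ℂ) ∈
      Ideal.span {(X 0 : MvPolynomial (Fin 3) ℂ) ^ 2, (X 1 : MvPolynomial (Fin 3) ℂ) ^ 2,
        (X 2 : MvPolynomial (Fin 3) ℂ) ^ 2,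
        (X 0 * X 1 + X 0 * X 2 + X 1 * X 2 : MvPolynomial (Fin 3) ℂ)} := by
  have hq : (X 0 * X 1 + X 0 * X 2 + X 1 * X 2 : MvPolynomial (Fin 3) ℂ) ∈
      Ideal.span {(X 0 : MvPolynomial (Fin 3) ℂ) ^ 2, (X 1 : MvPolynomial (Fin 3) ℂ) ^ 2,
        (X 2 : MvPolynomial (Fin 3) ℂ) ^ 2,
        (X 0 * X 1 + X 0 * X 2 + X 1 * X 2 : MvPolynomial (Fin 3) ℂ)} :=
    Ideal.subset_span (by simp)
  have hx2 : ((X 0 : MvPolynomial (Fin 3) ℂ) ^ 2) ∈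
      Ideal.span {(X 0 : MvPolynomial (Fin 3) ℂ) ^ 2, (X 1 : MvPolynomial (Fin 3) ℂ) ^ 2,
        (X 2 : MvPolynomial (Fin 3) ℂ) ^ 2,
        (X 0 * X 1 + X 0 * X 2 + X 1 * X 2 : MvPolynomial (Fin 3) ℂ)} :=
    Ideal.subset_span (by simp)
  have h : (X 0 * X 1 * X 2 : MvPolynomial (Fin 3) ℂ)
      = X 0 * (X 0 * X 1 + X 0 * X 2 + X 1 * X 2)
        - (X 1 * X 0 ^ 2 + X 2 * X 0 ^ 2) := by ring
  rw [h]
  exact Ideal.sub_mem _ (Ideal.mul_mem_left _ _ hq)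
    (Ideal.add_mem _ (Ideal.mul_mem_left _ _ hx2) (Ideal.mul_mem_left _ _ hx2))

private lemma key_mem (k : ℕ) : ∀ m : Fin 3 →₀ ℕ, 2 * k + 1 ≤ m 0 + m 1 + m 2 →
    (monomial m (1 : ℂ)) ∈
      (Ideal.span {(X 0 : MvPolynomial (Fin 3) ℂ) ^ 2, (X 1 : MvPolynomial (Fin 3) ℂ) ^ 2,
        (X 2 : MvPolynomial (Fin 3) ℂ) ^ 2,
        (X 0 * X 1 + X 0 * X 2 + X 1 * X 2 : MvPolynomial (Fin 3) ℂ)}) ^ k := by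
  induction k with
  | zero => intro m _; simp [Ideal.one_eq_top]
  | succ k ih =>
    intro m hm
    set I : Ideal (MvPolynomial (Fin 3) ℂ) :=
      Ideal.span {(X 0 : MvPolynomial (Fin 3) ℂ) ^ 2, (X 1 : MvPolynomial (Fin 3) ℂ) ^ 2,
        (X 2 : MvPolynomial (Fin 3) ℂ) ^ 2,
        (X 0 * X 1 + X 0 * X 2 + X 1 * X 2 : MvPolynomial (Fin 3) ℂ)} with hI
    have hgen : ∀ j : Fin 3, (X j : MvPolynomial (Fin 3) ℂ) ^ 2 ∈ I := by
      intro j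
      fin_cases j <;> exact Ideal.subset_span (by simp)
    have step : ∀ j : Fin 3, 2 ≤ m j → monomial m (1 : ℂ) ∈ I ^ (k + 1) := by
      intro j hj
      set m' : Fin 3 →₀ ℕ := m - Finsupp.single j 2 with hm'
      have happ : ∀ i, m' i = m i - Finsupp.single j 2 i := by
        intro i; rw [hm', Finsupp.tsub_apply]
      have hsplit : m = Finsupp.single j 2 + m' := by
        ext i
        rw [Finsupp.add_apply, happ, Finsupp.single_apply]
        by_cases h : j = i
        · subst h; simp; omega
        · simp [h]
      have hdeg : 2 * k + 1 ≤ m' 0 + m' 1 + m' 2 := by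
        have h0 := happ 0; have h1 := happ 1; have h2 := happ 2
        fin_cases j <;> simp [Finsupp.single_apply] at h0 h1 h2 hj <;> omega
      have : monomial m (1 : ℂ) = X j ^ 2 * monomial m' 1 := by
        rw [hsplit, monomial_single_add]
      rw [this, pow_succ']
      exact Ideal.mul_mem_mul (hgen j) (ih m' hdeg)
    by_cases h0 : 2 ≤ m 0
    · exact step 0 h0
    by_cases h1 : 2 ≤ m 1
    · exact step 1 h1
    by_cases h2 : 2 ≤ m 2
    · exact step 2 h2
    -- all exponents ≤ 1, so degree ≤ 3, hence k = 0 and all exponents = 1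
    have hk0 : k = 0 := by omega
    have e0 : m 0 = 1 := by omega
    have e1 : m 1 = 1 := by omega
    have e2 : m 2 = 1 := by omega
    have hmeq : m = Finsupp.single 0 1 + (Finsupp.single 1 1 + Finsupp.single 2 1) := by
      ext i
      fin_cases i <;> simp [Finsupp.single_apply, e0, e1, e2]
    have : monomial m (1 : ℂ) = X 0 * X 1 * X 2 := by
      rw [hmeq, monomial_single_add, monomial_single_add, ← X_pow_eq_monomial]
      ring
    rw [this, hk0, pow_one]
    exact xyz_mem

/-- The Hilbert function of the graded quotient `ℂ[x_1,…,x_n]/J` at degree `i`. -/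
noncomputable def hilbertFunction {n : ℕ} (J : Ideal (MvPolynomial (Fin n) ℂ)) (i : ℕ) : ℕ :=
  Module.finrank ℂ (Submodule.map (Ideal.Quotient.mkₐ ℂ J).toLinearMap
    (homogeneousSubmodule (Fin n) ℂ i))

theorem stmt_18 (k : ℕ) (hk : 1 ≤ k) :
    (∀ m : Fin 3 →₀ ℕ, (∑ i : Fin 3, m i) = 2 * k + 1 →
      (monomial m (1 : ℂ)) ∈
        (Ideal.span {(X 0 : MvPolynomial (Fin 3) ℂ) ^ 2, (X 1 : MvPolynomial (Fin 3) ℂ) ^ 2,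
            (X 2 : MvPolynomial (Fin 3) ℂ) ^ 2,
            (X 0 * X 1 + X 0 * X 2 + X 1 * X 2 : MvPolynomial (Fin 3) ℂ)}) ^ k) ∧
    (∀ i : ℕ, 2 * k + 1 ≤ i →
      hilbertFunction
        ((Ideal.span {(X 0 : MvPolynomial (Fin 3) ℂ) ^ 2, (X 1 : MvPolynomial (Fin 3) ℂ) ^ 2,
            (X 2 : MvPolynomial (Fin 3) ℂ) ^ 2,
            (X 0 * X 1 + X 0 * X 2 + X 1 * X 2 : MvPolynomial (Fin 3) ℂ)}) ^ k) i = 0) := by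
  constructor
  · intro m hm
    apply key_mem
    rw [Fin.sum_univ_three] at hm
    omega
  · intro i hi
    rw [hilbertFunction]
    have hbot : Submodule.map (Ideal.Quotient.mkₐ ℂ
        ((Ideal.span {(X 0 : MvPolynomial (Fin 3) ℂ) ^ 2, (X 1 : MvPolynomial (Fin 3) ℂ) ^ 2,
            (X 2 : MvPolynomial (Fin 3) ℂ) ^ 2,
            (X 0 * X 1 + X 0 * X 2 + X 1 * X 2 : MvPolynomial (Fin 3) ℂ)}) ^ k)).toLinearMap
        (homogeneousSubmodule (Fin 3) ℂ i) = ⊥ := by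
      rw [Submodule.eq_bot_iff]
      rintro x ⟨p, hp, rfl⟩
      simp only [AlgHom.toLinearMap_apply, Ideal.Quotient.mkₐ_eq_mk]
      rw [Ideal.Quotient.eq_zero_iff_mem]
      have hph : p.IsHomogeneous i := hp
      rw [← p.support_sum_monomial_coeff]
      refine Ideal.sum_mem _ fun v hv => ?_
      have hvdeg : (Finsupp.weight 1) v = i := hph (mem_support_iff.mp hv)
      have hdeg : 2 * k + 1 ≤ v 0 + v 1 + v 2 := by
        have : v.degree = i := by rw [Finsupp.degree_eq_weight_one]; exact hvdeg
        have hsum : v 0 + v 1 + v 2 = v.degree := by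
          rw [Finsupp.degree, ← Fin.sum_univ_three fun j => v j]
          exact (Finset.sum_subset (Finset.subset_univ v.support)
            (fun x _ hx => Finsupp.notMem_support_iff.mp hx)).symm
        omega
      have : monomial v (coeff v p) = C (coeff v p) * monomial v 1 := by
        rw [C_mul_monomial, mul_one]
      rw [this]
      exact Ideal.mul_mem_left _ _ (key_mem k v hdeg)
    rw [hbot]
    exact finrank_bot ℂ _
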